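/- arXiv:2605.23446 — 4 statements merged into one kernel-verified Lean document; each statement's English description precedes it below -/
import Mathlib

section
/- Let G be a graph in which every vertex has degree at least 3, and let U ⊆ V(G). Then the columns of the matrix X_{G,U} are pairwise orthogonal, where X_{G,U} has rows indexed by vertices (v,S) of the CFI graph G_U and columns indexed by edges e ∈ E(G), with entry +1 if e ∈ E(v)∩S, −1 if e ∈ E(v)\S, and 0 if e ∉ E(v). -/
/-!
The sum splits over the vertices `v`; only those with `e₁ ∈ E(v)` contribute. Degree at
least 3 gives a third edge `c ∈ E(v)`, and `S ↦ S ∆ {e₁, c}` is a fixed-point-free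
involution on the admissible `S` that keeps the parity of `S` and the sign at `e₂`
but flips the sign at `e₁`.
-/

open Finset

variable {V : Type*} [Fintype V] [DecidableEq V]

/-- The vertex set of the CFI graph `G_U`: pairs `(v, S)` with `S ⊆ E(v)` and
`|S| ≡ |{v} ∩ U| (mod 2)`. -/
def cfiVerts (G : SimpleGraph V) [DecidableRel G.Adj] (U : Finset V) :
    Finset (V × Finset (Sym2 V)) :=
  Finset.univ.filter
    (fun p => p.2 ⊆ G.incidenceFinset p.1 ∧ p.2.card % 2 = (if p.1 ∈ U then 1 else 0))

/-- The entry of the matrix `X_{G,U}` in the row of fiber vertex `(v,S)` and the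
column of edge `e`: `+1` if `e ∈ E(v) ∩ S`, `-1` if `e ∈ E(v) \ S`, `0` if `e ∉ E(v)`. -/
def Xentry (G : SimpleGraph V) [DecidableRel G.Adj]
    (p : V × Finset (Sym2 V)) (e : Sym2 V) : ℤ :=
  if e ∈ G.incidenceFinset p.1 then (if e ∈ p.2 then 1 else -1) else 0

open scoped symmDiff

theorem Finset.card_symmDiff_add_two_mul_card_inter {α : Type*} [DecidableEq α]
    (s t : Finset α) : #(s ∆ t) + 2 * #(s ∩ t) = #s + #t := by
  have hsub : s ∩ t ⊆ s ∪ t := inter_subset_union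
  rw [symmDiff_eq_sup_sdiff_inf, sup_eq_union, inf_eq_inter, card_sdiff_of_subset hsub]
  have := card_union_add_card_inter s t
  have := card_le_card hsub
  omega

theorem Finset.card_symmDiff_mod_two_of_even {α : Type*} [DecidableEq α]
    (s : Finset α) {t : Finset α} (ht : Even #t) : #(s ∆ t) % 2 = #s % 2 := by
  obtain ⟨k, hk⟩ := ht
  have := card_symmDiff_add_two_mul_card_inter s t
  omega

theorem Finset.exists_mem_ne_ne {α : Type*} [DecidableEq α] {s : Finset α} (hs : 2 < #s)
    (a b : α) : ∃ c ∈ s, c ≠ a ∧ c ≠ b := by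
  have : 1 < #(s.erase a) := by have := pred_card_le_card_erase (s := s) (a := a); omega
  obtain ⟨c, hc, hcb⟩ := exists_mem_ne this b
  exact ⟨c, mem_of_mem_erase hc, ne_of_mem_erase hc, hcb⟩

theorem Finset.sum_powerset_card_mod_two_eq_zero_of_symmDiff {α M : Type*} [DecidableEq α]
    [AddCommGroup M] {E t : Finset α} (htE : t ⊆ E) (ht_even : Even #t) (ht : t.Nonempty)
    (r : ℕ) (f : Finset α → M) (hf : ∀ S, f (S ∆ t) = -f S) :
    ∑ S ∈ E.powerset with #S % 2 = r, f S = 0 := by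
  refine sum_involution (fun S _ => S ∆ t) (fun S _ => by rw [hf, add_neg_cancel])
    (fun S _ _ => by rw [Ne, symmDiff_eq_left]; exact ht.ne_empty) (fun S hS => ?_)
    (fun S _ => symmDiff_symmDiff_cancel_right t S)
  simp only [mem_filter, mem_powerset] at hS ⊢
  exact ⟨symmDiff_le_sup.trans (union_subset hS.1 htE),
    by rw [card_symmDiff_mod_two_of_even S ht_even, hS.2]⟩

section Xentry

variable (G : SimpleGraph V) [DecidableRel G.Adj] (v : V) (S T : Finset (Sym2 V)) {e : Sym2 V}

theorem Xentry_eq_zero_of_notMem (he : e ∉ G.incidenceFinset v) : Xentry G (v, S) e = 0 :=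
  if_neg he

theorem Xentry_symmDiff_of_mem (he : e ∈ T) : Xentry G (v, S ∆ T) e = -Xentry G (v, S) e := by
  unfold Xentry
  split_ifs <;> simp_all [mem_symmDiff]

theorem Xentry_symmDiff_of_notMem (he : e ∉ T) : Xentry G (v, S ∆ T) e = Xentry G (v, S) e := by
  unfold Xentry
  split_ifs <;> simp_all [mem_symmDiff]

end Xentry

theorem X_columns_orthogonal_general (G : SimpleGraph V) [DecidableRel G.Adj] (U : Finset V)
    (hdeg : ∀ v : V, 3 ≤ G.degree v)
    (e₁ e₂ : Sym2 V) (hne : e₁ ≠ e₂) :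
    ∑ p ∈ cfiVerts G U, Xentry G p e₁ * Xentry G p e₂ = 0 := by
  rw [sum_finset_product _ univ
    (fun v => {S ∈ (G.incidenceFinset v).powerset | #S % 2 = if v ∈ U then 1 else 0})
    (fun p => by simp [cfiVerts])]
  refine sum_eq_zero fun v _ => ?_
  by_cases he₁ : e₁ ∈ G.incidenceFinset v
  · obtain ⟨c, hc, hce₁, hce₂⟩ := exists_mem_ne_ne
      (by rw [G.card_incidenceFinset_eq_degree]; exact hdeg v) e₁ e₂
    have he₂ : e₂ ∉ ({e₁, c} : Finset (Sym2 V)) := by simp [hne.symm, hce₂.symm]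
    refine sum_powerset_card_mod_two_eq_zero_of_symmDiff
      (insert_subset he₁ (singleton_subset_iff.2 hc)) (card_pair hce₁.symm ▸ even_two)
      (insert_nonempty _ _) _ _ fun S => ?_
    rw [Xentry_symmDiff_of_mem G v S _ (mem_insert_self _ _),
      Xentry_symmDiff_of_notMem G v S _ he₂, neg_mul]
  · exact sum_eq_zero fun S _ => by rw [Xentry_eq_zero_of_notMem G v S he₁, zero_mul]

/-- If every vertex of `G` has degree at least 3 and `U ⊆ V(G)`, then
the columns of the matrix `X_{G,U}` are pairwise orthogonal. -/
theorem X_columns_orthogonal (G : SimpleGraph V) [DecidableRel G.Adj] (U : Finset V)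
    (hdeg : ∀ v : V, 3 ≤ G.degree v)
    (e₁ e₂ : Sym2 V) (he₁ : e₁ ∈ G.edgeFinset) (he₂ : e₂ ∈ G.edgeFinset) (hne : e₁ ≠ e₂) :
    ∑ p ∈ cfiVerts G U, Xentry G p e₁ * Xentry G p e₂ = 0 :=
  X_columns_orthogonal_general G U hdeg e₁ e₂ hne
end

section
/- Let U ∈ ℝ^{n×k} have rows U₁,...,Uₙ and let C ⊆ [n] be a class such that the multiset {Uᵢ ⊙ Uₘ : m ∈ C} equals {Uⱼ ⊙ Uₘ : m ∈ C} for all i,j ∈ C, where ⊙ is the elementwise product, all rows Uᵢ for i ∈ C have the same entrywise absolute values, and the rows {Uᵢ}_{i∈C} are pairwise distinct. Let sᵢ ∈ ℤ₂^K be the vector of sign bits of the nonzero entries of Uᵢ (on the common support K). Then the set A = {sᵢ : i ∈ C} is an affine subspace of ℤ₂^K. -/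
/-!
The sign bit turns multiplication of nonzero reals into addition in `ℤ₂`, so an equality
`Uᵢ ⊙ Uₚ = Uⱼ ⊙ Uₘ` between rows with common absolute values gives `sᵢ + sₚ = sⱼ + sₘ`.
The multiset hypothesis provides such an `m ∈ C` for all `i, j, p ∈ C`, hence the set of
sign vectors is closed under `(x, y, z) ↦ x - y + z`, and a nonempty subset of an abelian
group with that property is a coset of a subgroup.
-/

open Finset

/-- The sign-bit vector of a row `U i`: bit `1` at the coordinates where the entry is
negative, `0` elsewhere (in particular `0` off the support). -/
noncomputable def signBits {n k : ℕ} (U : Fin n → Fin k → ℝ) (i : Fin n) : Fin k → ZMod 2 :=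
  fun col => if U i col < 0 then 1 else 0

theorem AddSubgroup.exists_eq_image_add_of_sub_add_mem {G : Type*} [AddCommGroup G]
    {S : Set G} {a : G} (ha : a ∈ S) (hS : ∀ x ∈ S, ∀ y ∈ S, ∀ z ∈ S, x - y + z ∈ S) :
    ∃ W : AddSubgroup G, S = (fun w => a + w) '' W := by
  refine ⟨AddSubgroup.ofSub {v | a + v ∈ S} ⟨0, by simpa using ha⟩ fun v hv w hw => ?_, ?_⟩
  · show a + (v + -w) ∈ S
    convert hS _ hv _ hw _ ha using 1
    abel
  ext x
  refine ⟨fun hx => ⟨x - a, ?_, add_sub_cancel a x⟩, by rintro ⟨v, hv, rfl⟩; exact hv⟩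
  show a + (x - a) ∈ S
  rwa [add_sub_cancel]

section NegBit

variable {R : Type*} [Ring R] [LinearOrder R] [IsStrictOrderedRing R]

def negBit (a : R) : ZMod 2 := if a < 0 then 1 else 0

theorem negBit_mul {a b : R} (ha : a ≠ 0) (hb : b ≠ 0) :
    negBit (a * b) = negBit a + negBit b := by
  unfold negBit
  rcases ha.lt_or_gt with ha | ha <;> rcases hb.lt_or_gt with hb | hb
  · simp [ha, hb, (mul_pos_of_neg_of_neg ha hb).not_gt]; decide
  · simp [ha, hb.not_gt, mul_neg_of_neg_of_pos ha hb]
  · simp [ha.not_gt, hb, mul_neg_of_pos_of_neg ha hb]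
  · simp [ha.not_gt, hb.not_gt, (mul_pos ha hb).not_gt]

theorem negBit_add_eq_of_mul_eq {a b c d : R} (hb : |b| = |a|) (hc : |c| = |a|)
    (hd : |d| = |a|) (h : a * b = c * d) :
    negBit a + negBit b = negBit c + negBit d := by
  rcases eq_or_ne a 0 with rfl | ha
  · simp only [abs_zero, abs_eq_zero] at hb hc hd
    simp [hb, hc, hd]
  · have hne : ∀ {x : R}, |x| = |a| → x ≠ 0 := fun hx h0 => ha (by simpa [h0] using hx.symm)
    rw [← negBit_mul ha (hne hb), ← negBit_mul (hne hc) (hne hd), h]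

end NegBit

theorem signBits_add_eq_of_mul_eq {n k : ℕ} {U : Fin n → Fin k → ℝ} {i j p m : Fin n}
    (hp : ∀ col, |U p col| = |U i col|) (hj : ∀ col, |U j col| = |U i col|)
    (hm : ∀ col, |U m col| = |U i col|)
    (h : (fun col => U i col * U p col) = fun col => U j col * U m col) :
    signBits U i + signBits U p = signBits U j + signBits U m :=
  funext fun col => negBit_add_eq_of_mul_eq (hp col) (hj col) (hm col) (congrFun h col)

theorem sign_bits_form_affine_subspace_general
    {n k : ℕ} (U : Fin n → Fin k → ℝ) (C : Finset (Fin n)) (hC : C.Nonempty)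
    (habs : ∀ i ∈ C, ∀ j ∈ C, ∀ col : Fin k, |U i col| = |U j col|)
    (hmult : ∀ i ∈ C, ∀ j ∈ C,
      C.val.map (fun m => fun col => U i col * U m col)
        = C.val.map (fun m => fun col => U j col * U m col)) :
    ∃ (a : Fin k → ZMod 2) (W : Submodule (ZMod 2) (Fin k → ZMod 2)),
      {x : Fin k → ZMod 2 | ∃ i ∈ C, signBits U i = x}
        = (fun w => a + w) '' (W : Set (Fin k → ZMod 2)) := by
  obtain ⟨i₀, hi₀⟩ := hC
  have hclosed : ∀ i ∈ C, ∀ j ∈ C, ∀ p ∈ C, ∃ m ∈ C,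
      signBits U m = signBits U i - signBits U j + signBits U p := by
    intro i hi j hj p hp
    obtain ⟨m, hm, hprod⟩ := Multiset.mem_map.mp
      (hmult i hi j hj ▸ Multiset.mem_map_of_mem (fun m col => U i col * U m col) hp)
    have hsum := signBits_add_eq_of_mul_eq (habs p hp i hi) (habs j hj i hi) (habs m hm i hi)
      hprod.symm
    exact ⟨m, hm, by rw [sub_add_eq_add_sub, hsum]; abel⟩
  obtain ⟨W, hW⟩ := AddSubgroup.exists_eq_image_add_of_sub_add_mem
    (S := {x | ∃ i ∈ C, signBits U i = x}) ⟨i₀, hi₀, rfl⟩ (by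
      rintro _ ⟨i, hi, rfl⟩ _ ⟨j, hj, rfl⟩ _ ⟨p, hp, rfl⟩
      exact hclosed i hi j hj p hp)
  exact ⟨_, AddSubgroup.toZModSubmodule 2 W, hW⟩

/-- Let `U ∈ ℝ^{n×k}` and let `C` be a class of rows such that the
multiset `{Uᵢ ⊙ Uₘ : m ∈ C}` of elementwise products is the same for all `i ∈ C`, all
rows in `C` share the same entrywise absolute values, and the rows of `C` are pairwise
distinct.  Then the set of sign-bit vectors `{sᵢ : i ∈ C}` is an affine subspace of
`ℤ₂^k`. -/
theorem sign_bits_form_affine_subspace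
    {n k : ℕ} (U : Fin n → Fin k → ℝ) (C : Finset (Fin n)) (hC : C.Nonempty)
    (habs : ∀ i ∈ C, ∀ j ∈ C, ∀ col : Fin k, |U i col| = |U j col|)
    (hdist : ∀ i ∈ C, ∀ j ∈ C, U i = U j → i = j)
    (hmult : ∀ i ∈ C, ∀ j ∈ C,
      C.val.map (fun m => fun col => U i col * U m col)
        = C.val.map (fun m => fun col => U j col * U m col)) :
    ∃ (a : Fin k → ZMod 2) (W : Submodule (ZMod 2) (Fin k → ZMod 2)),
      {x : Fin k → ZMod 2 | ∃ i ∈ C, signBits U i = x}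
        = (fun w => a + w) '' (W : Set (Fin k → ZMod 2)) :=
  sign_bits_form_affine_subspace_general U C hC habs hmult
end

section
/- Let s : ℝ^{n×k} → ℤ₂^k be permutation-invariant and satisfy that s(t·U) ⊕ t ⊕ s(U) is a sign automorphism of U for every column-wise orthonormal U and every t ∈ ℤ₂^k (where t·U flips the sign of column j iff tⱼ = 1, and a ∈ ℤ₂^k is a sign automorphism of U if a·U equals U up to a row permutation). Define c(U) to be the matrix s(U)·U with rows sorted lexicographically. Then c is invariant under the action of Sₙ × ℤ₂^k and c(U) lies in the orbit of U; i.e., c is a valid canonicalization. -/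
open Finset

variable {n k : ℕ}

/-- Sign action of `t ∈ ℤ₂^k` on an `n × k` matrix: flip the sign of column `j`
iff `tⱼ = 1`. -/
def signAct (t : Fin k → ZMod 2) (U : Matrix (Fin n) (Fin k) ℝ) :
    Matrix (Fin n) (Fin k) ℝ :=
  Matrix.of fun i j => (if t j = 1 then -1 else 1) * U i j

/-- Row-permutation action of `τ ∈ Sₙ` on an `n × k` matrix. -/
def permAct (τ : Equiv.Perm (Fin n)) (U : Matrix (Fin n) (Fin k) ℝ) :
    Matrix (Fin n) (Fin k) ℝ :=
  Matrix.of fun i j => U (τ i) j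

/-- `U` has orthonormal columns. -/
def OrthonormalCols (U : Matrix (Fin n) (Fin k) ℝ) : Prop :=
  ∀ j j' : Fin k, ∑ i, U i j * U i j' = if j = j' then 1 else 0

/-- `a ∈ ℤ₂^k` is a sign automorphism of `U`: `a·U` equals `U` up to a row
permutation. -/
def IsSignAut (U : Matrix (Fin n) (Fin k) ℝ) (a : Fin k → ZMod 2) : Prop :=
  ∃ τ : Equiv.Perm (Fin n), signAct a U = permAct τ U

/-- Sort the rows of a matrix lexicographically. -/
noncomputable def lexSortRows (U : Matrix (Fin n) (Fin k) ℝ) :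
    Matrix (Fin n) (Fin k) ℝ :=
  letI R : Lex (Fin k → ℝ) → Lex (Fin k → ℝ) → Prop := fun a b => a < b ∨ a = b
  letI : DecidableRel R := Classical.decRel _
  haveI : IsTrans (Lex (Fin k → ℝ)) R := by
    constructor
    rintro a b c (h₁ | rfl) (h₂ | rfl)
    · exact Or.inl (lt_trans h₁ h₂)
    · exact Or.inl h₁
    · exact Or.inl h₂
    · exact Or.inr rfl
  haveI : Std.Antisymm R := by
    constructor
    rintro a b (h₁ | rfl) (h₂ | h₂) <;> first | rfl | exact absurd h₂ (asymm h₁) | exact h₂.symm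
  haveI : Std.Total R := by
    constructor
    intro a b
    haveI : IsTrichotomous (Lex (Fin k → ℝ)) (· < ·) :=
      ⟨(Pi.isTrichotomous_lex _ _ (IsWellFounded.wf (r := ((· < ·) : Fin k → Fin k → Prop)))).1⟩
    rcases trichotomous_of ((· < ·) : Lex (Fin k → ℝ) → Lex (Fin k → ℝ) → Prop) a b with h | h | h
    · exact Or.inl (Or.inl h)
    · exact Or.inl (Or.inr h)
    · exact Or.inr (Or.inl h)
  Matrix.of fun i j =>
    ofLex (List.getD
      (Multiset.sort
        ((Finset.univ : Finset (Fin n)).val.map fun r => toLex (U r)) R)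
      i (toLex fun _ => 0)) j

/-- The candidate canonicalization induced by a sign canonicalization `s`:
apply the canonical signs and then sort rows lexicographically. -/
noncomputable def canon (s : Matrix (Fin n) (Fin k) ℝ → (Fin k → ZMod 2))
    (U : Matrix (Fin n) (Fin k) ℝ) : Matrix (Fin n) (Fin k) ℝ :=
  lexSortRows (signAct (s U) U)

/-!
Sorting the rows forgets any row permutation, so `c(U)` only depends on the `Sₙ`-orbit
of `s(U)·U`. By hypothesis `s(t·U) ⊕ t ⊕ s(U)` acts on `U` as some row permutation `σ`, and since
every sign flip is an involution,
`s(t·U)·(t·U) = s(U)·((s(t·U) ⊕ t ⊕ s(U))·U) = σ·(s(U)·U)`,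
which has the same sorted rows as `s(U)·U`.
-/

lemma ite_add_eq_one_neg_one {R : Type*} [Ring R] (x y : ZMod 2) :
    (if x + y = 1 then (-1 : R) else 1) =
      (if x = 1 then -1 else 1) * (if y = 1 then -1 else 1) := by
  have h : ∀ z : ZMod 2, z = 0 ∨ z = 1 := by decide
  rcases h x with rfl | rfl <;> rcases h y with rfl | rfl <;> simp +decide

lemma signAct_signAct (a b : Fin k → ZMod 2) (U : Matrix (Fin n) (Fin k) ℝ) :
    signAct a (signAct b U) = signAct (a + b) U := by
  ext i j
  simp only [signAct, Matrix.of_apply, Pi.add_apply, ite_add_eq_one_neg_one]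
  ring

lemma signAct_signAct_self (a : Fin k → ZMod 2) (U : Matrix (Fin n) (Fin k) ℝ) :
    signAct a (signAct a U) = U := by
  ext i j
  simp only [signAct, Matrix.of_apply]
  split_ifs <;> ring

lemma signAct_permAct (a : Fin k → ZMod 2) (τ : Equiv.Perm (Fin n))
    (U : Matrix (Fin n) (Fin k) ℝ) :
    signAct a (permAct τ U) = permAct τ (signAct a U) := rfl

lemma lexSortRows_permAct (τ : Equiv.Perm (Fin n)) (U : Matrix (Fin n) (Fin k) ℝ) :
    lexSortRows (permAct τ U) = lexSortRows U := by
  have hrows :=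
    calc univ.val.map (fun r => toLex (permAct τ U r))
        = (univ.val.map τ).map fun r => toLex (U r) := by rw [Multiset.map_map]; rfl
      _ = univ.val.map fun r => toLex (U r) := by rw [Multiset.map_univ_val_equiv]
  unfold lexSortRows
  rw [hrows]

theorem List.Perm.exists_perm_getD_eq {α : Type*} [DecidableEq α] {l : List α} {g : Fin n → α}
    (h : l.Perm (List.ofFn g)) (d : α) :
    ∃ σ : Equiv.Perm (Fin n), ∀ i : Fin n, l.getD i d = g (σ i) := by
  have hl : l.length = n := by simpa using h.length_eq
  let e : Fin n → Fin n := fun i => Fin.cast (by simp) (h.idxBij (Fin.cast hl.symm i))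
  let e' : Fin n → Fin n := fun i => Fin.cast hl (h.symm.idxBij (Fin.cast (by simp) i))
  refine ⟨⟨e, e', fun i => ?_, fun i => ?_⟩, fun i => ?_⟩
  · simp [e, e', h.idxBij_symm_idxBij]
  · simp [e, e', h.idxBij_idxBij_symm]
  · have hi := h.getElem_idxBij_eq_getElem (Fin.cast hl.symm i)
    rw [List.getD_eq_getElem _ _ (by omega)]
    exact hi.symm.trans (List.getElem_ofFn ..)

lemma lexSortRows_eq_permAct (U : Matrix (Fin n) (Fin k) ℝ) :
    ∃ τ : Equiv.Perm (Fin n), lexSortRows U = permAct τ U := by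
  -- The sort's order instances are local to `lexSortRows`, so abstract the sorted list.
  suffices H : ∀ l : List (Lex (Fin k → ℝ)),
      (l : Multiset _) = univ.val.map (fun r => toLex (U r)) →
      ∃ τ, Matrix.of (fun (i : Fin n) j => ofLex (l.getD i (toLex fun _ => 0)) j) =
        permAct τ U from
    H _ (by rw [Multiset.sort_eq])
  intro l hl
  classical
  obtain ⟨τ, hτ⟩ := (Multiset.coe_eq_coe.mp (hl.trans (Fin.univ_val_map _))).exists_perm_getD_eq
    (toLex fun _ => 0)
  exact ⟨τ, by ext i j; simp only [Matrix.of_apply, permAct, hτ]; rfl⟩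

/-- If `s` is permutation-invariant and `s(t·U) ⊕ t ⊕ s(U)` is a
sign automorphism of `U` for every column-orthonormal `U` and every `t`, then the map
`c(U) = lexsort(s(U)·U)` is invariant under the action of `Sₙ × ℤ₂^k` and `c(U)` lies
in the orbit of `U`; i.e. `c` is a valid canonicalization. -/
theorem sign_canonicalization_induces_canonicalization
    (s : Matrix (Fin n) (Fin k) ℝ → (Fin k → ZMod 2))
    (hperm : ∀ (U : Matrix (Fin n) (Fin k) ℝ) (τ : Equiv.Perm (Fin n)),
      s (permAct τ U) = s U)
    (hsign : ∀ U : Matrix (Fin n) (Fin k) ℝ, OrthonormalCols U →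
      ∀ t : Fin k → ZMod 2, IsSignAut U (s (signAct t U) + t + s U)) :
    ∀ U : Matrix (Fin n) (Fin k) ℝ, OrthonormalCols U →
      (∀ (τ : Equiv.Perm (Fin n)) (t : Fin k → ZMod 2),
        canon s (permAct τ (signAct t U)) = canon s U) ∧
      (∃ (τ : Equiv.Perm (Fin n)) (t : Fin k → ZMod 2),
        canon s U = permAct τ (signAct t U)) := by
  intro U hU
  refine ⟨fun τ t => ?_, ?_⟩
  · obtain ⟨σ, hσ⟩ := hsign U hU t
    have key : signAct (s (signAct t U)) (signAct t U) = permAct σ (signAct (s U) U) :=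
      calc signAct (s (signAct t U)) (signAct t U)
          = signAct (s U) (signAct (s U) (signAct (s (signAct t U) + t) U)) := by
            rw [signAct_signAct_self, signAct_signAct]
        _ = signAct (s U) (signAct (s (signAct t U) + t + s U) U) := by
            rw [signAct_signAct (s U) (s (signAct t U) + t), add_comm (s U)]
        _ = permAct σ (signAct (s U) U) := by rw [hσ, signAct_permAct]
    rw [canon, hperm, signAct_permAct, lexSortRows_permAct, key, lexSortRows_permAct, canon]
  · obtain ⟨τ, hτ⟩ := lexSortRows_eq_permAct (signAct (s U) U)
    exact ⟨τ, s U, hτ⟩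
end

section
/- Let G be a graph, U ⊆ V(G), and let f : V(G_U) → ℝ be constant on fibers, i.e., f(v,S) = y(v) for some y : V(G) → ℝ. If y is an eigenvector of the adjacency matrix of G with eigenvalue λ, and G is such that every base vertex has degree 3, then f is an eigenvector of the adjacency matrix of the CFI graph G_U with eigenvalue 2λ. -/
open Finset SimpleGraph

variable {V : Type*} [Fintype V] [DecidableEq V]

/-- Vertices of the CFI graph `G_U`. -/
def CFIVert (G : SimpleGraph V) [DecidableRel G.Adj] (U : Finset V) : Type _ :=
  {p : V × Finset (Sym2 V) //
    p.2 ⊆ G.incidenceFinset p.1 ∧ p.2.card % 2 = (if p.1 ∈ U then 1 else 0)}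

/-- The CFI graph `G_U`: `(v,S)` and `(u,T)` are adjacent iff `uv ∈ E(G)` and
`uv ∉ S △ T`. -/
def CFIGraph (G : SimpleGraph V) [DecidableRel G.Adj] (U : Finset V) :
    SimpleGraph (CFIVert G U) where
  Adj a b := G.Adj a.1.1 b.1.1 ∧ s(a.1.1, b.1.1) ∉ symmDiff a.1.2 b.1.2
  symm := ⟨by
    rintro a b ⟨h1, h2⟩
    refine ⟨h1.symm, ?_⟩
    rwa [Sym2.eq_swap, symmDiff_comm]⟩
  loopless := ⟨by rintro a ⟨h1, _⟩; exact G.irrefl h1⟩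

instance (G : SimpleGraph V) [DecidableRel G.Adj] (U : Finset V) :
    Fintype (CFIVert G U) := by
  unfold CFIVert; infer_instance

instance (G : SimpleGraph V) [DecidableRel G.Adj] (U : Finset V) :
    DecidableRel (CFIGraph G U).Adj := fun a b => by
  unfold CFIGraph; exact instDecidableAnd

/-! Every neighbour of `(v, S)` in `G_U` lies over a neighbour `u` of `v`, and the lifts
`(u, T)` adjacent to `(v, S)` are the subsets `T` of the three edges at `u` with prescribed
parity and prescribed membership of the edge `uv`. Toggling `uv` flips only the membership
condition and toggling another edge at `u` flips only the parity, so these two involutions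
halve the `2 ^ 3` subsets twice: there are exactly two such `T`. Hence
`(A_{G_U} f)(v, S) = 2 ∑_{u ~ v} y u = 2 λ y v`, and `f ≠ 0` because no fiber is empty. -/

open scoped symmDiff

namespace Finset

variable {α : Type*}

theorem two_mul_card_filter_of_involutive {s : Finset α} (p : α → Prop) [DecidablePred p]
    {σ : α → α} (hσ : Function.Involutive σ) (hs : ∀ a ∈ s, σ a ∈ s)
    (hp : ∀ a ∈ s, p (σ a) ↔ ¬p a) : 2 * #{a ∈ s | p a} = #s := by
  have hswap : #{a ∈ s | ¬p a} = #{a ∈ s | p a} := by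
    refine card_nbij' σ σ ?_ ?_ (fun a _ => hσ a) (fun a _ => hσ a)
    · intro a ha
      rw [mem_coe, mem_filter] at ha ⊢
      exact ⟨hs a ha.1, (hp a ha.1).2 ha.2⟩
    · intro a ha
      rw [mem_coe, mem_filter] at ha ⊢
      exact ⟨hs a ha.1, (hp a ha.1).1.mt (not_not.2 ha.2)⟩
  rw [← card_filter_add_card_filter_not p (s := s), hswap, two_mul]

variable [DecidableEq α]

theorem card_symmDiff_singleton_mod_two (T : Finset α) (x : α) :
    #(T ∆ {x}) % 2 = (#T + 1) % 2 := by
  by_cases hx : x ∈ T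
  · have : T ∆ {x} = T.erase x := by ext; grind [mem_symmDiff]
    rw [this, ← card_erase_add_one hx]
    omega
  · have : T ∆ {x} = insert x T := by ext; grind [mem_symmDiff]
    rw [this, card_insert_of_notMem hx]

theorem symmDiff_singleton_mem_powerset {s T : Finset α} {x : α} (hx : x ∈ s)
    (hT : T ∈ s.powerset) : T ∆ {x} ∈ s.powerset :=
  mem_powerset.2 <| symmDiff_le_sup.trans <| union_subset (mem_powerset.1 hT) (by simpa)

theorem card_powerset_filter_card_mod_two_and_mem_iff {s : Finset α} {e : α} (he : e ∈ s)
    (hs : 2 ≤ #s) {b : ℕ} (hb : b < 2) (c : Prop) [Decidable c] :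
    #{T ∈ s.powerset | #T % 2 = b ∧ (e ∈ T ↔ c)} = 2 ^ (#s - 2) := by
  obtain ⟨x, hx, hxe⟩ := exists_mem_ne (by omega : 1 < #s) e
  have hmem : 2 * #{T ∈ s.powerset | e ∈ T ↔ c} = 2 ^ #s := by
    rw [← card_powerset]
    refine two_mul_card_filter_of_involutive _ (σ := (· ∆ {e}))
      (fun T => symmDiff_symmDiff_cancel_right {e} T)
      (fun T => symmDiff_singleton_mem_powerset he) (fun T _ => ?_)
    simp only [mem_symmDiff, mem_singleton]
    tauto
  have hpar : 2 * #{T ∈ {T ∈ s.powerset | e ∈ T ↔ c} | #T % 2 = b} =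
      #{T ∈ s.powerset | e ∈ T ↔ c} := by
    refine two_mul_card_filter_of_involutive _ (σ := (· ∆ {x}))
      (fun T => symmDiff_symmDiff_cancel_right {x} T) (fun T hT => ?_) (fun T _ => ?_)
    · simp only [mem_filter] at hT ⊢
      refine ⟨symmDiff_singleton_mem_powerset hx hT.1, ?_⟩
      simpa [mem_symmDiff, hxe.symm] using hT.2
    · rw [card_symmDiff_singleton_mod_two]
      omega
  rw [filter_filter] at hpar
  simp only [and_comm (a := e ∈ _ ↔ c)] at hpar
  obtain ⟨n, hn⟩ : ∃ n, #s = n + 2 := ⟨#s - 2, by omega⟩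
  rw [hn, pow_add] at hmem
  rw [hn, Nat.add_sub_cancel]
  omega

end Finset

section CFI

variable {G : SimpleGraph V} [DecidableRel G.Adj] {U : Finset V}

theorem card_cfiGraph_neighborFinset_filter_fst_eq (p : CFIVert G U) {u : V}
    (hu : G.Adj p.1.1 u) :
    #{q ∈ (CFIGraph G U).neighborFinset p | q.1.1 = u} =
      #{T ∈ (G.incidenceFinset u).powerset | #T % 2 = (if u ∈ U then 1 else 0) ∧
        (s(p.1.1, u) ∈ T ↔ s(p.1.1, u) ∈ p.1.2)} := by
  refine card_nbij (fun q => q.1.2) (fun q hq => ?_) (fun q hq q' hq' h => ?_) (fun T hT => ?_)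
  · obtain ⟨⟨-, hsd⟩, rfl⟩ := by simpa using hq
    simp only [coe_filter, mem_powerset, Set.mem_ofPred_eq]
    refine ⟨q.2.1, q.2.2, ?_⟩
    rw [mem_symmDiff] at hsd
    tauto
  · simp only [coe_filter, mem_neighborFinset, Set.mem_ofPred_eq] at hq hq'
    exact Subtype.ext (Prod.ext (hq.2.trans hq'.2.symm) h)
  · simp only [coe_filter, mem_powerset, Set.mem_ofPred_eq] at hT
    refine ⟨(⟨(u, T), hT.1, hT.2.1⟩ : CFIVert G U),
      mem_coe.2 (mem_filter.2 ⟨(mem_neighborFinset _ _ _).2 ⟨hu, ?_⟩, rfl⟩), rfl⟩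
    show s(p.1.1, u) ∉ p.1.2 ∆ T
    rw [mem_symmDiff]
    tauto

theorem card_cfiGraph_neighborFinset_filter_fst_eq_of_degree_eq_three
    (hdeg : ∀ v, G.degree v = 3) (p : CFIVert G U) (u : V) :
    #{q ∈ (CFIGraph G U).neighborFinset p | q.1.1 = u} = if G.Adj p.1.1 u then 2 else 0 := by
  split_ifs with hu
  · have he : s(p.1.1, u) ∈ G.incidenceFinset u :=
      (G.mem_incidenceFinset _ _).2 (G.mk'_mem_incidenceSet_right_iff.2 hu)
    have hcard : #(G.incidenceFinset u) = 3 := by rw [card_incidenceFinset_eq_degree, hdeg]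
    rw [card_cfiGraph_neighborFinset_filter_fst_eq p hu,
      card_powerset_filter_card_mod_two_and_mem_iff he (by omega) (by split_ifs <;> norm_num),
      hcard, Nat.pow_one]
  · refine card_eq_zero.2 (filter_eq_empty_iff.2 fun q hq hqu => hu ?_)
    rw [← hqu]
    exact (((CFIGraph G U).mem_neighborFinset p q).1 hq).1

theorem cfiGraph_adjMatrix_mulVec_lift {R : Type*} [NonAssocSemiring R]
    (hdeg : ∀ v, G.degree v = 3) (y : V → R) :
    ((CFIGraph G U).adjMatrix R).mulVec (fun q => y q.1.1) =
      fun p => 2 * (G.adjMatrix R).mulVec y p.1.1 := by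
  funext p
  rw [adjMatrix_mulVec_apply, adjMatrix_mulVec_apply,
    ← sum_fiberwise' _ (fun q : CFIVert G U => q.1.1) y]
  simp only [sum_const, card_cfiGraph_neighborFinset_filter_fst_eq_of_degree_eq_three hdeg]
  rw [neighborFinset_eq_filter (G := G), sum_filter, mul_sum]
  refine sum_congr rfl fun u _ => ?_
  split_ifs <;> simp [two_mul]

theorem exists_cfiVert_fst_eq (U : Finset V) {w : V} (hw : G.degree w ≠ 0) :
    ∃ q : CFIVert G U, q.1.1 = w := by
  by_cases hwU : w ∈ U
  · obtain ⟨e, he⟩ : (G.incidenceFinset w).Nonempty := by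
      rwa [← card_pos, card_incidenceFinset_eq_degree, pos_iff_ne_zero]
    exact ⟨⟨(w, {e}), by simpa using he, by simp [hwU]⟩, rfl⟩
  · exact ⟨⟨(w, ∅), by simp, by simp [hwU]⟩, rfl⟩

end CFI

/-- If every vertex of `G` has degree `3`, `y` is an eigenvector of
the adjacency matrix of `G` with eigenvalue `λ`, and `f` is the fiber-constant lift
`f(v,S) = y(v)` to the CFI graph `G_U`, then `f` is an eigenvector of the adjacency
matrix of `G_U` with eigenvalue `2λ`. -/
theorem fiber_constant_lift_is_eigenvector
    (G : SimpleGraph V) [DecidableRel G.Adj] (U : Finset V)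
    (hdeg : ∀ v : V, G.degree v = 3)
    (lam : ℝ) (y : V → ℝ) (hy : y ≠ 0)
    (heig : (G.adjMatrix ℝ).mulVec y = lam • y) :
    ((CFIGraph G U).adjMatrix ℝ).mulVec (fun p : CFIVert G U => y p.1.1)
        = (2 * lam) • (fun p : CFIVert G U => y p.1.1) ∧
    (fun p : CFIVert G U => y p.1.1) ≠ 0 := by
  refine ⟨?_, ?_⟩
  · rw [cfiGraph_adjMatrix_mulVec_lift hdeg, heig]
    funext p
    simp [mul_assoc]
  · obtain ⟨w, hw⟩ := Function.ne_iff.1 hy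
    obtain ⟨q, rfl⟩ := exists_cfiVert_fst_eq U (by simp [hdeg] : G.degree w ≠ 0)
    exact Function.ne_iff.2 ⟨q, hw⟩
end
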